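/- arXiv:2303.13326 — 10 statements merged into one kernel-verified Lean document; each statement's English description precedes it below -/
import Mathlib

section
/- Let E be a real inner product space, ι a nonempty index set, L ≥ 0, and g : ι → E → ℝ a family of differentiable functions whose gradients are all L-Lipschitz: ‖∇(g i)(x) − ∇(g i)(y)‖ ≤ L‖x − y‖ for all i, x, y. Assume that for every w ∈ E the set {g i w : i ∈ ι} is bounded above, and let f(w) = ⨆ i, g i w. Then f is L-weakly convex, i.e., the function w ↦ f(w) + (L/2)‖w‖² is convex on E. -/
/-!
Each `g i` plus `(L/2)‖·‖²` has gradient `∇(g i) + L • id`, which is monotone because the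
Lipschitz bound gives `⟪∇(g i) x - ∇(g i) y, x - y⟫ ≥ -L‖x - y‖²`; a function with monotone
gradient is convex (restrict it to lines, where its derivative is monotone). Adding
`(L/2)‖·‖²` commutes with the supremum, and a supremum of convex functions is convex.
-/

open Set AffineMap
open scoped RealInnerProductSpace

theorem ConvexOn.ciSup {E ι : Type*} [AddCommGroup E] [Module ℝ E] [Nonempty ι]
    {s : Set E} {f : ι → E → ℝ} (hf : ∀ i, ConvexOn ℝ s (f i))
    (hbdd : ∀ x ∈ s, BddAbove (range fun i => f i x)) :
    ConvexOn ℝ s (fun x => ⨆ i, f i x) := by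
  refine ⟨(hf (Classical.arbitrary ι)).1, fun x hx y hy a b ha hb hab => ciSup_le fun i => ?_⟩
  calc f i (a • x + b • y) ≤ a • f i x + b • f i y := (hf i).2 hx hy ha hb hab
    _ ≤ a • (⨆ j, f j x) + b • ⨆ j, f j y := by
      gcongr
      exacts [le_ciSup (hbdd x hx) i, le_ciSup (hbdd y hy) i]

theorem convexOn_univ_of_forall_convexOn_lineMap {E : Type*} [AddCommGroup E] [Module ℝ E]
    {f : E → ℝ} (h : ∀ x y : E, ConvexOn ℝ univ fun t : ℝ => f (lineMap x y t)) :
    ConvexOn ℝ univ f := by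
  refine ⟨convex_univ, fun x _ y _ a b ha hb hab => ?_⟩
  have hline := (h x y).2 (mem_univ 0) (mem_univ 1) ha hb hab
  dsimp only at hline
  rw [smul_zero, smul_eq_mul, mul_one, zero_add, lineMap_apply_zero, lineMap_apply_one,
    lineMap_apply_module, ← eq_sub_of_add_eq hab] at hline
  exact hline

section Gradient

variable {E : Type*} [NormedAddCommGroup E] [InnerProductSpace ℝ E] [CompleteSpace E]
  {f : E → ℝ} {G : E → E}

theorem convexOn_univ_of_hasGradientAt_of_inner_nonneg (hf : ∀ x, HasGradientAt f (G x) x)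
    (hG : ∀ x y, 0 ≤ ⟪G x - G y, x - y⟫) : ConvexOn ℝ univ f := by
  refine convexOn_univ_of_forall_convexOn_lineMap fun x y => ?_
  have hderiv : ∀ t : ℝ, HasDerivAt (fun t => f (lineMap x y t)) ⟪G (lineMap x y t), y - x⟫ t :=
    fun t => by
      have h := (hf (lineMap x y t)).hasFDerivAt.comp_hasDerivAt t hasDerivAt_lineMap
      simp only [InnerProductSpace.toDual_apply_apply] at h
      exact h
  refine Monotone.convexOn_univ_of_deriv (fun t => (hderiv t).differentiableAt) ?_
  intro s t hst
  rw [(hderiv s).deriv, (hderiv t).deriv, ← sub_nonneg, ← inner_sub_left]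
  rcases hst.eq_or_lt with rfl | hlt
  · simp
  have hmono := hG (lineMap x y t) (lineMap x y s)
  have hsub : lineMap x y t - lineMap x y s = (t - s) • (y - x) := by
    simp only [lineMap_apply_module']
    module
  rw [hsub, real_inner_smul_right] at hmono
  exact nonneg_of_mul_nonneg_right hmono (sub_pos.mpr hlt)

theorem HasGradientAt.add_half_mul_norm_sq {x G' : E} (hf : HasGradientAt f G' x) (L : ℝ) :
    HasGradientAt (fun w => f w + L / 2 * ‖w‖ ^ 2) (G' + L • x) x := by
  rw [hasGradientAt_iff_hasFDerivAt]
  refine (hf.hasFDerivAt.add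
    ((hasStrictFDerivAt_norm_sq x).hasFDerivAt.const_mul (L / 2))).congr_fderiv ?_
  ext v
  simp only [add_apply, smul_apply,
    InnerProductSpace.toDual_apply_apply, coe_innerSL_apply, inner_add_left, real_inner_smul_left]
  ring

theorem convexOn_add_half_mul_norm_sq_of_lipschitz_gradient (L : ℝ)
    (hf : ∀ x, HasGradientAt f (G x) x) (hlip : ∀ x y, ‖G x - G y‖ ≤ L * ‖x - y‖) :
    ConvexOn ℝ univ fun w => f w + L / 2 * ‖w‖ ^ 2 := by
  refine convexOn_univ_of_hasGradientAt_of_inner_nonneg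
    (fun x => (hf x).add_half_mul_norm_sq L) fun x y => ?_
  have hcs := neg_le_of_abs_le (abs_real_inner_le_norm (G x - G y) (x - y))
  have hlip' := mul_le_mul_of_nonneg_right (hlip x y) (norm_nonneg (x - y))
  calc (0 : ℝ) ≤ ⟪G x - G y, x - y⟫ + L * ‖x - y‖ ^ 2 := by nlinarith
    _ = ⟪G x + L • x - (G y + L • y), x - y⟫ := by
      rw [add_sub_add_comm, ← smul_sub, inner_add_left, real_inner_smul_left,
        real_inner_self_eq_norm_sq]

end Gradient

theorem weaklyConvex_ciSup_of_lipschitz_gradients_general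
    {E : Type*} [NormedAddCommGroup E] [InnerProductSpace ℝ E] [CompleteSpace E]
    {ι : Type*} [Nonempty ι] (L : ℝ)
    (g : ι → E → ℝ) (grad : ι → E → E)
    (hgrad : ∀ (i : ι) (x : E), HasGradientAt (g i) (grad i x) x)
    (hlip : ∀ (i : ι) (x y : E), ‖grad i x - grad i y‖ ≤ L * ‖x - y‖)
    (hbdd : ∀ w : E, BddAbove (Set.range fun i => g i w)) :
    ConvexOn ℝ Set.univ (fun w : E => (⨆ i, g i w) + L / 2 * ‖w‖ ^ 2) := by
  have hsup : (fun w : E => (⨆ i, g i w) + L / 2 * ‖w‖ ^ 2)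
      = fun w => ⨆ i, (g i w + L / 2 * ‖w‖ ^ 2) :=
    funext fun w => ciSup_add (hbdd w) _
  rw [hsup]
  exact ConvexOn.ciSup
    (fun i => convexOn_add_half_mul_norm_sq_of_lipschitz_gradient L (hgrad i) (hlip i))
    fun w _ => (hbdd w).range_comp_left (monotone_id.add_const _)

/-- The inner-maximized ("real") loss is `L`-weakly convex: the pointwise supremum
of a family of differentiable functions with `L`-Lipschitz gradients (bounded above
at each point) becomes convex after adding `(L/2)‖·‖²`. -/
theorem weaklyConvex_ciSup_of_lipschitz_gradients
    {E : Type*} [NormedAddCommGroup E] [InnerProductSpace ℝ E] [CompleteSpace E]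
    {ι : Type*} [Nonempty ι] (L : ℝ) (hL : 0 ≤ L)
    (g : ι → E → ℝ) (grad : ι → E → E)
    (hgrad : ∀ (i : ι) (x : E), HasGradientAt (g i) (grad i x) x)
    (hlip : ∀ (i : ι) (x y : E), ‖grad i x - grad i y‖ ≤ L * ‖x - y‖)
    (hbdd : ∀ w : E, BddAbove (Set.range fun i => g i w)) :
    ConvexOn ℝ Set.univ (fun w : E => (⨆ i, g i w) + L / 2 * ‖w‖ ^ 2) :=
  weaklyConvex_ciSup_of_lipschitz_gradients_general L g grad hgrad hlip hbdd
end

section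
/- Let E be a real inner product space, w, x ∈ E with w ≠ 0, y ∈ {−1, 1}, and ε > 0. Define the worst-case perturbation δ⋆ = −(ε·y/‖w‖) • w. Then for every δ ∈ E with ‖δ‖ ≤ ε, the logistic loss satisfies log(1 + exp(−y·⟪w, x + δ⟫)) ≤ log(1 + exp(−y·⟪w, x + δ⋆⟫)). In other words, δ⋆ maximizes the logistic loss over the closed ℓ₂-ball of radius ε. -/
/-!
The loss `log (1 + exp (-(y * ⟪w, x + δ⟫)))` is decreasing in the margin `y * ⟪w, x + δ⟫`, so
it suffices to minimise `y * ⟪w, δ⟫ = ⟪w, y • δ⟫` over the ball. Since `|y| = 1`, the vector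
`y • δ` again lies in the ball, and by Cauchy–Schwarz `⟪w, y • δ⟫ ≥ -ε‖w‖`, a value attained
at `δ⋆`.
-/

open RealInnerProductSpace

namespace Real

lemma log_one_add_exp_le_log_one_add_exp {a b : ℝ} (h : a ≤ b) :
    log (1 + exp a) ≤ log (1 + exp b) :=
  log_le_log (by positivity) (by gcongr)

end Real

section InnerProduct

variable {E : Type*} [NormedAddCommGroup E] [InnerProductSpace ℝ E]

lemma neg_mul_norm_le_real_inner_of_norm_le {w δ : E} {ε : ℝ} (hδ : ‖δ‖ ≤ ε) :
    -(ε * ‖w‖) ≤ ⟪w, δ⟫ := by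
  have hcs : -(‖w‖ * ‖δ‖) ≤ ⟪w, δ⟫ := (abs_le.mp (abs_real_inner_le_norm w δ)).1
  nlinarith [norm_nonneg w]

-- Also true for `w = 0`, where `c / ‖w‖ = 0` is a junk value but both sides vanish.
lemma real_inner_div_norm_smul_self (w : E) (c : ℝ) : ⟪w, (c / ‖w‖) • w⟫ = c * ‖w‖ := by
  rw [real_inner_smul_right, real_inner_self_eq_norm_sq]
  rcases eq_or_ne ‖w‖ 0 with h | h
  · simp [h]
  · field_simp

end InnerProduct

theorem logistic_loss_l2_worst_case_perturbation_general
    {E : Type*} [NormedAddCommGroup E] [InnerProductSpace ℝ E]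
    (w x : E) (y : ℝ) (hy : y = -1 ∨ y = 1) (ε : ℝ) :
    ∀ δ : E, ‖δ‖ ≤ ε →
      Real.log (1 + Real.exp (-(y * ⟪w, x + δ⟫))) ≤
        Real.log (1 + Real.exp (-(y * ⟪w, x + (-(ε * y / ‖w‖)) • w⟫))) := by
  intro δ hδ
  have hy_abs : |y| = 1 := by rcases hy with rfl | rfl <;> norm_num
  have hyδ : ‖y • δ‖ ≤ ε := by rwa [norm_smul, Real.norm_eq_abs, hy_abs, one_mul]
  apply Real.log_one_add_exp_le_log_one_add_exp
  rw [neg_le_neg_iff, inner_add_right, inner_add_right, mul_add, mul_add, add_le_add_iff_left]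
  calc y * ⟪w, (-(ε * y / ‖w‖)) • w⟫ = -(ε * (|y| * |y|) * ‖w‖) := by
        rw [← neg_div, real_inner_div_norm_smul_self, abs_mul_abs_self]; ring
    _ = -(ε * ‖w‖) := by rw [hy_abs, mul_one, mul_one]
    _ ≤ ⟪w, y • δ⟫ := neg_mul_norm_le_real_inner_of_norm_le hyδ
    _ = y * ⟪w, δ⟫ := real_inner_smul_right w δ y

/-- Closed-form solution of the inner maximization for the logistic loss under
`ℓ₂`-bounded attacks: the FGM perturbation `δ⋆ = −(εy/‖w‖) w` maximizes the
logistic loss over the closed ball of radius `ε`. -/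
theorem logistic_loss_l2_worst_case_perturbation
    {E : Type*} [NormedAddCommGroup E] [InnerProductSpace ℝ E]
    (w x : E) (hw : w ≠ 0) (y : ℝ) (hy : y = -1 ∨ y = 1) (ε : ℝ) (hε : 0 < ε) :
    ∀ δ : E, ‖δ‖ ≤ ε →
      Real.log (1 + Real.exp (-(y * ⟪w, x + δ⟫))) ≤
        Real.log (1 + Real.exp (-(y * ⟪w, x + (-(ε * y / ‖w‖)) • w⟫))) :=
  logistic_loss_l2_worst_case_perturbation_general w x y hy ε
end

section
/- Let M be a positive natural number, w, x : Fin M → ℝ, y ∈ {−1, 1}, and ε > 0. Define δ⋆ : Fin M → ℝ by δ⋆ i = −ε·y·sign(w i), where sign is the real sign function (sign 0 = 0). Then for every δ : Fin M → ℝ with |δ i| ≤ ε for all i, the logistic loss satisfies log(1 + exp(−y·∑ i, w i · (x i + δ i))) ≤ log(1 + exp(−y·∑ i, w i · (x i + δ⋆ i))). In other words, δ⋆ maximizes the logistic loss over the closed ℓ∞-ball of radius ε. -/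
open Finset

/-- Closed-form solution of the inner maximization for the logistic loss under
`ℓ∞`-bounded attacks: the FGSM perturbation `δ⋆ i = −εy·sign(w i)` maximizes the
logistic loss over the closed `ℓ∞`-ball of radius `ε`. -/
theorem logistic_loss_linf_worst_case_perturbation
    (M : ℕ) (hM : 0 < M) (w x : Fin M → ℝ) (y : ℝ) (hy : y = -1 ∨ y = 1)
    (ε : ℝ) (hε : 0 < ε) :
    ∀ δ : Fin M → ℝ, (∀ i, |δ i| ≤ ε) →
      Real.log (1 + Real.exp (-(y * ∑ i, w i * (x i + δ i)))) ≤
        Real.log (1 + Real.exp (-(y * ∑ i, w i * (x i + (-(ε * y * Real.sign (w i))))))) := by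
  intro δ hδ
  have hy2 : y * y = 1 := by rcases hy with h | h <;> simp [h]
  have hyabs : |y| = 1 := by rcases hy with h | h <;> simp [h]
  apply Real.log_le_log (by positivity)
  have hkey : y * ∑ i, w i * (x i + (-(ε * y * Real.sign (w i)))) ≤
      y * ∑ i, w i * (x i + δ i) := by
    rw [← sub_nonneg, ← mul_sub, ← Finset.sum_sub_distrib, Finset.mul_sum]
    apply Finset.sum_nonneg
    intro i _
    have : w i * (x i + δ i) - w i * (x i + -(ε * y * Real.sign (w i)))
        = w i * δ i + ε * y * (Real.sign (w i) * w i) := by ring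
    rw [this, mul_add]
    have h1 : Real.sign (w i) * w i = |w i| := by
      rcases lt_trichotomy (w i) 0 with h | h | h
      · rw [Real.sign_of_neg h, abs_of_neg h]; ring
      · simp [h]
      · rw [Real.sign_of_pos h, abs_of_pos h]; ring
    rw [h1]
    have h2 : -(ε * |w i|) ≤ y * (w i * δ i) := by
      have := neg_abs_le (y * (w i * δ i))
      refine le_trans ?_ this
      rw [neg_le_neg_iff, abs_mul, abs_mul, hyabs, one_mul]
      exact mul_le_mul_of_nonneg_left (hδ i) (abs_nonneg _) |>.trans_eq (mul_comm _ _)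
    have : y * (ε * y * |w i|) = ε * |w i| := by rw [show y * (ε * y * |w i|) = (y*y) * (ε * |w i|) by ring, hy2, one_mul]
    linarith
  have := Real.exp_le_exp.mpr (neg_le_neg hkey)
  linarith
end

section
/- Let E be a real inner product space, w, x ∈ E with w ≠ 0, y ∈ {−1, 1}, and ε > 0. Define δ⋆ = −(ε·y/‖w‖) • w. Then for every δ ∈ E with ‖δ‖ ≤ ε, the exponential loss satisfies exp(−y·⟪w, x + δ⟫) ≤ exp(−y·⟪w, x + δ⋆⟫). In other words, δ⋆ maximizes the exponential loss over the closed ℓ₂-ball of radius ε. -/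
open RealInnerProductSpace

/-- Closed-form solution of the inner maximization for the exponential loss under
`ℓ₂`-bounded attacks: `δ⋆ = −(εy/‖w‖) w` maximizes the exponential loss over the
closed ball of radius `ε`. -/
theorem exponential_loss_l2_worst_case_perturbation
    {E : Type*} [NormedAddCommGroup E] [InnerProductSpace ℝ E]
    (w x : E) (hw : w ≠ 0) (y : ℝ) (hy : y = -1 ∨ y = 1) (ε : ℝ) (hε : 0 < ε) :
    ∀ δ : E, ‖δ‖ ≤ ε →
      Real.exp (-(y * ⟪w, x + δ⟫)) ≤ Real.exp (-(y * ⟪w, x + (-(ε * y / ‖w‖)) • w⟫)) := by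
  intro δ hδ
  rw [Real.exp_le_exp, neg_le_neg_iff]
  rw [inner_add_right, inner_add_right, inner_smul_right, real_inner_self_eq_norm_sq]
  have hw' : (0:ℝ) < ‖w‖ := norm_pos_iff.mpr hw
  have hy2 : y * y = 1 := by rcases hy with h | h <;> simp [h]
  have h1 : y * (-(ε * y / ‖w‖) * ‖w‖ ^ 2) = -(ε * ‖w‖) := by
    field_simp
    ring_nf
    rw [pow_two, hy2]
  have hcs : -(ε * ‖w‖) ≤ y * ⟪w, δ⟫ := by
    have habs : |y * ⟪w, δ⟫| ≤ ε * ‖w‖ := by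
      rw [abs_mul]
      have : |y| = 1 := by rcases hy with h | h <;> simp [h]
      rw [this, one_mul]
      calc |⟪w, δ⟫| ≤ ‖w‖ * ‖δ‖ := abs_real_inner_le_norm w δ
        _ ≤ ‖w‖ * ε := by nlinarith
        _ = ε * ‖w‖ := mul_comm _ _
    linarith [neg_abs_le (y * ⟪w, δ⟫)]
  rw [mul_add, mul_add, h1]
  linarith
end

section
/- Let E be a real inner product space, w, x ∈ E, y ∈ ℝ, and ε > 0. Assume w ≠ 0 and ⟪w, x⟫ ≠ y. Define δ⋆ = (ε·sign(⟪w, x⟫ − y)/‖w‖) • w, where sign is the real sign function. Then for every δ ∈ E with ‖δ‖ ≤ ε, the squared error satisfies (⟪w, x + δ⟫ − y)² ≤ (⟪w, x + δ⋆⟫ − y)². In other words, δ⋆ maximizes the least-mean-squares loss over the closed ℓ₂-ball of radius ε. -/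
open RealInnerProductSpace

/-- Closed-form solution of the inner maximization for the least-mean-squares loss
under `ℓ₂`-bounded attacks: `δ⋆ = (ε·sign(⟪w,x⟫ − y)/‖w‖) w` maximizes the squared
error over the closed ball of radius `ε`. -/
theorem lms_loss_l2_worst_case_perturbation
    {E : Type*} [NormedAddCommGroup E] [InnerProductSpace ℝ E]
    (w x : E) (y : ℝ) (hw : w ≠ 0) (hxy : ⟪w, x⟫ ≠ y) (ε : ℝ) (hε : 0 < ε) :
    ∀ δ : E, ‖δ‖ ≤ ε →
      (⟪w, x + δ⟫ - y) ^ 2 ≤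
        (⟪w, x + (ε * Real.sign (⟪w, x⟫ - y) / ‖w‖) • w⟫ - y) ^ 2 := by
  intro δ hδ
  set a : ℝ := ⟪w, x⟫ - y with ha
  have hwn : (0:ℝ) < ‖w‖ := norm_pos_iff.mpr hw
  have ha0 : a ≠ 0 := sub_ne_zero.mpr hxy
  have hsign : Real.sign a * a = |a| := by
    rcases lt_or_gt_of_ne ha0 with h | h
    · rw [Real.sign_of_neg h, abs_of_neg h]; ring
    · rw [Real.sign_of_pos h, abs_of_pos h]; ring
  have hrhs : ⟪w, x + (ε * Real.sign a / ‖w‖) • w⟫ - y = a + ε * Real.sign a * ‖w‖ := by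
    rw [inner_add_right, real_inner_smul_right, real_inner_self_eq_norm_sq]
    field_simp
    ring
  rw [hrhs]
  have hsq : (a + ε * Real.sign a * ‖w‖) ^ 2 = (|a| + ε * ‖w‖) ^ 2 := by
    have hs2 : Real.sign a ^ 2 = 1 := by
      rcases lt_or_gt_of_ne ha0 with h | h
      · rw [Real.sign_of_neg h]; ring
      · rw [Real.sign_of_pos h]; ring
    linear_combination 2 * ε * ‖w‖ * hsign + ε ^ 2 * ‖w‖ ^ 2 * hs2 - sq_abs a
  rw [hsq]
  have hlhs : ⟪w, x + δ⟫ - y = a + ⟪w, δ⟫ := by rw [inner_add_right]; ring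
  rw [hlhs]
  have habs : |a + ⟪w, δ⟫| ≤ |a| + ε * ‖w‖ := by
    calc |a + ⟪w, δ⟫| ≤ |a| + |⟪w, δ⟫| := abs_add_le _ _
    _ ≤ |a| + ‖w‖ * ‖δ‖ := by
        gcongr
        exact abs_real_inner_le_norm w δ
    _ ≤ |a| + ε * ‖w‖ := by nlinarith
  have := sq_le_sq' (neg_le_of_abs_le habs |> fun h => h) (le_of_abs_le habs)
  calc (a + ⟪w, δ⟫) ^ 2 = |a + ⟪w, δ⟫| ^ 2 := (sq_abs _).symm
  _ ≤ (|a| + ε * ‖w‖) ^ 2 := by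
      apply pow_le_pow_left₀ (abs_nonneg _) habs
end

section
/- Let M be a positive natural number, w, x : Fin M → ℝ, y ∈ ℝ, and ε > 0. Assume a := (∑ i, w i · x i) − y ≠ 0. Define δ⋆ : Fin M → ℝ by δ⋆ i = ε·sign(a)·sign(w i), where sign is the real sign function (sign 0 = 0). Then for every δ : Fin M → ℝ with |δ i| ≤ ε for all i, the squared error satisfies ((∑ i, w i · (x i + δ i)) − y)² ≤ ((∑ i, w i · (x i + δ⋆ i)) − y)². In other words, δ⋆ maximizes the least-mean-squares loss over the closed ℓ∞-ball of radius ε. -/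
/-!
With `a = wᵀx − y` the loss at `x + δ` is `(a + wᵀδ)²`. By Hölder, `|wᵀδ| ≤ ε ‖w‖₁` on the
`ℓ∞`-ball, so `|a + wᵀδ| ≤ |a| + ε ‖w‖₁`; the perturbation `δ⋆` attains this bound because
`wᵀδ⋆ = sign(a) ε ‖w‖₁` has the sign of `a`.
-/

open Finset

namespace Real

lemma mul_sign_self (x : ℝ) : x * sign x = |x| := by
  rcases lt_trichotomy x 0 with h | rfl | h
  · rw [sign_of_neg h, abs_of_neg h, mul_neg_one]
  · simp
  · rw [sign_of_pos h, abs_of_pos h, mul_one]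

lemma abs_add_sign_mul_of_ne_zero {a t : ℝ} (ha : a ≠ 0) (ht : 0 ≤ t) :
    |a + sign a * t| = |a| + t := by
  rcases ha.lt_or_gt with h | h
  · rw [sign_of_neg h, abs_of_neg h, abs_of_nonpos (by linarith)]; ring
  · rw [sign_of_pos h, abs_of_pos h, abs_of_nonneg (by linarith)]; ring

lemma sq_add_le_sq_add_sign_mul {a b t : ℝ} (ha : a ≠ 0) (hb : |b| ≤ t) :
    (a + b) ^ 2 ≤ (a + sign a * t) ^ 2 := by
  have ht : 0 ≤ t := (abs_nonneg b).trans hb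
  refine sq_le_sq.mpr ?_
  calc |a + b| ≤ |a| + |b| := abs_add_le a b
    _ ≤ |a| + t := by gcongr
    _ = |a + sign a * t| := (abs_add_sign_mul_of_ne_zero ha ht).symm

end Real

section LinearModel

variable {ι : Type*} [Fintype ι]

lemma sum_mul_add_sub_eq (w x d : ι → ℝ) (y : ℝ) :
    (∑ i, w i * (x i + d i)) - y = ((∑ i, w i * x i) - y) + ∑ i, w i * d i := by
  simp only [mul_add, sum_add_distrib]
  ring

lemma abs_sum_mul_le_of_abs_le (w δ : ι → ℝ) {ε : ℝ} (hδ : ∀ i, |δ i| ≤ ε) :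
    |∑ i, w i * δ i| ≤ ε * ∑ i, |w i| := by
  calc |∑ i, w i * δ i| ≤ ∑ i, |w i| * |δ i| := by
        simpa only [abs_mul] using abs_sum_le_sum_abs (fun i => w i * δ i) univ
    _ ≤ ∑ i, |w i| * ε := by gcongr with i; exact hδ i
    _ = ε * ∑ i, |w i| := by rw [mul_sum]; simp only [mul_comm]

lemma sum_mul_const_mul_sign (w : ι → ℝ) (c : ℝ) :
    ∑ i, w i * (c * Real.sign (w i)) = c * ∑ i, |w i| := by
  rw [mul_sum]
  exact sum_congr rfl fun i _ => by rw [← Real.mul_sign_self]; ring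

end LinearModel

theorem lms_loss_linf_worst_case_perturbation_general
    (M : ℕ) (w x : Fin M → ℝ) (y : ℝ)
    (ha : (∑ i, w i * x i) - y ≠ 0) (ε : ℝ) :
    ∀ δ : Fin M → ℝ, (∀ i, |δ i| ≤ ε) →
      ((∑ i, w i * (x i + δ i)) - y) ^ 2 ≤
        ((∑ i, w i * (x i + ε * Real.sign ((∑ j, w j * x j) - y) * Real.sign (w i))) - y) ^ 2 := by
  intro δ hδ
  set a := (∑ i, w i * x i) - y
  rw [sum_mul_add_sub_eq, sum_mul_add_sub_eq w x (fun i => ε * Real.sign a * Real.sign (w i)),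
    sum_mul_const_mul_sign, mul_comm ε, mul_assoc]
  exact Real.sq_add_le_sq_add_sign_mul ha (abs_sum_mul_le_of_abs_le w δ hδ)

/-- Closed-form solution of the inner maximization for the least-mean-squares loss
under `ℓ∞`-bounded attacks: `δ⋆ i = ε·sign(wᵀx − y)·sign(w i)` maximizes the squared
error over the closed `ℓ∞`-ball of radius `ε`. -/
theorem lms_loss_linf_worst_case_perturbation
    (M : ℕ) (hM : 0 < M) (w x : Fin M → ℝ) (y : ℝ)
    (ha : (∑ i, w i * x i) - y ≠ 0) (ε : ℝ) (hε : 0 < ε) :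
    ∀ δ : Fin M → ℝ, (∀ i, |δ i| ≤ ε) →
      ((∑ i, w i * (x i + δ i)) - y) ^ 2 ≤
        ((∑ i, w i * (x i + ε * Real.sign ((∑ j, w j * x j) - y) * Real.sign (w i))) - y) ^ 2 :=
  lms_loss_linf_worst_case_perturbation_general M w x y ha ε
end

section
/- Let E be a real inner product space, w, x ∈ E, y ∈ ℝ, τ > 0, and ε > 0. Assume w ≠ 0 and ⟪w, x⟫ ≠ y. Define δ⋆ = (ε·sign(⟪w, x⟫ − y)/‖w‖) • w. Then for every δ ∈ E with ‖δ‖ ≤ ε, the Huber loss satisfies H_τ(⟪w, x + δ⟫ − y) ≤ H_τ(⟪w, x + δ⋆⟫ − y). In other words, δ⋆ maximizes the Huber loss over the closed ℓ₂-ball of radius ε. -/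
open RealInnerProductSpace

/-- The Huber function with threshold `τ`. -/
noncomputable def huber (τ r : ℝ) : ℝ :=
  if |r| ≤ τ then r ^ 2 / 2 else τ * |r| - τ ^ 2 / 2

lemma huber_mono {τ a b : ℝ} (hτ : 0 < τ) (h : |a| ≤ |b|) :
    huber τ a ≤ huber τ b := by
  unfold huber
  split_ifs with ha hb hb
  · nlinarith [abs_nonneg a, abs_nonneg b, sq_abs a, sq_abs b]
  · push_neg at hb
    nlinarith [abs_nonneg a, sq_abs a, sq_abs b]
  · exact absurd (h.trans hb) ha
  · nlinarith

/-- Closed-form solution of the inner maximization for the Huber loss under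
`ℓ₂`-bounded attacks: the optimal perturbation coincides with that of the
least-mean-squares loss, `δ⋆ = (ε·sign(⟪w,x⟫ − y)/‖w‖) w`. -/
theorem huber_loss_l2_worst_case_perturbation
    {E : Type*} [NormedAddCommGroup E] [InnerProductSpace ℝ E]
    (w x : E) (y τ : ℝ) (hτ : 0 < τ) (hw : w ≠ 0) (hxy : ⟪w, x⟫ ≠ y)
    (ε : ℝ) (hε : 0 < ε) :
    ∀ δ : E, ‖δ‖ ≤ ε →
      huber τ (⟪w, x + δ⟫ - y) ≤
        huber τ (⟪w, x + (ε * Real.sign (⟪w, x⟫ - y) / ‖w‖) • w⟫ - y) := by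
  intro δ hδ
  set s := ⟪w, x⟫ - y with hs
  have hs0 : s ≠ 0 := sub_ne_zero.mpr hxy
  have hwn : (0:ℝ) < ‖w‖ := norm_pos_iff.mpr hw
  have hsign : Real.sign s * s = |s| := by
    rcases lt_or_gt_of_ne hs0 with h | h
    · rw [Real.sign_of_neg h]; rw [abs_of_neg h]; ring
    · rw [Real.sign_of_pos h, abs_of_pos h]; ring
  have key : ⟪w, x + (ε * Real.sign s / ‖w‖) • w⟫ - y
      = s + (ε * Real.sign s / ‖w‖) * ‖w‖ ^ 2 := by
    rw [inner_add_right, real_inner_smul_right, real_inner_self_eq_norm_sq, hs]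
    ring
  apply huber_mono hτ
  rw [key]
  have habs : |s + (ε * Real.sign s / ‖w‖) * ‖w‖ ^ 2| = |s| + ε * ‖w‖ := by
    have : (ε * Real.sign s / ‖w‖) * ‖w‖ ^ 2 = Real.sign s * (ε * ‖w‖) := by
      field_simp
    rw [this]
    rcases lt_or_gt_of_ne hs0 with h | h
    · rw [Real.sign_of_neg h]
      rw [abs_of_neg (by nlinarith), abs_of_neg h]; ring
    · rw [Real.sign_of_pos h]
      rw [abs_of_pos (by nlinarith), abs_of_pos h]; ring
  rw [habs]
  have : ⟪w, x + δ⟫ - y = s + ⟪w, δ⟫ := by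
    rw [inner_add_right, hs]; ring
  rw [this]
  calc |s + ⟪w, δ⟫| ≤ |s| + |⟪w, δ⟫| := abs_add_le _ _
    _ ≤ |s| + ε * ‖w‖ := by
        have := abs_real_inner_le_norm w δ
        nlinarith [norm_nonneg δ, norm_nonneg w]
end

section
/- Let M be a positive natural number, w, x : Fin M → ℝ, y ∈ ℝ, τ > 0, and ε > 0. Assume a := (∑ i, w i · x i) − y ≠ 0. Define δ⋆ : Fin M → ℝ by δ⋆ i = ε·sign(a)·sign(w i). Then for every δ : Fin M → ℝ with |δ i| ≤ ε for all i, the Huber loss satisfies H_τ((∑ i, w i · (x i + δ i)) − y) ≤ H_τ((∑ i, w i · (x i + δ⋆ i)) − y). In other words, δ⋆ maximizes the Huber loss over the closed ℓ∞-ball of radius ε. -/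
open Finset

lemma huber_mono_abs (τ : ℝ) (hτ : 0 < τ) {r r' : ℝ} (h : |r| ≤ |r'|) :
    huber τ r ≤ huber τ r' := by
  unfold huber
  have h0 : (0:ℝ) ≤ |r| := abs_nonneg r
  split_ifs with h1 h2 h2
  · nlinarith [sq_abs r, sq_abs r']
  · nlinarith [sq_abs r]
  · linarith
  · nlinarith

/-- Closed-form solution of the inner maximization for the Huber loss under
`ℓ∞`-bounded attacks: the optimal perturbation coincides with that of the
least-mean-squares loss, `δ⋆ i = ε·sign(wᵀx − y)·sign(w i)`. -/
theorem huber_loss_linf_worst_case_perturbation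
    (M : ℕ) (hM : 0 < M) (w x : Fin M → ℝ) (y τ : ℝ) (hτ : 0 < τ)
    (ha : (∑ i, w i * x i) - y ≠ 0) (ε : ℝ) (hε : 0 < ε) :
    ∀ δ : Fin M → ℝ, (∀ i, |δ i| ≤ ε) →
      huber τ ((∑ i, w i * (x i + δ i)) - y) ≤
        huber τ ((∑ i, w i * (x i + ε * Real.sign ((∑ j, w j * x j) - y) * Real.sign (w i))) - y) := by
  intro δ hδ
  set a : ℝ := (∑ i, w i * x i) - y with haa
  apply huber_mono_abs τ hτ
  have hsplit : ∀ d : Fin M → ℝ, (∑ i, w i * (x i + d i)) - y = a + ∑ i, w i * d i := by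
    intro d
    simp [mul_add, Finset.sum_add_distrib, haa]; ring
  rw [hsplit, hsplit]
  have hws : ∀ i, w i * (ε * Real.sign a * Real.sign (w i)) = ε * Real.sign a * |w i| := by
    intro i
    rcases lt_trichotomy (w i) 0 with h | h | h
    · rw [Real.sign_of_neg h, abs_of_neg h]; ring
    · simp [h]
    · rw [Real.sign_of_pos h, abs_of_pos h]; ring
  simp only [hws]
  rw [← Finset.mul_sum]
  set S : ℝ := ∑ i, |w i| with hS
  have hSnn : 0 ≤ S := Finset.sum_nonneg fun i _ => abs_nonneg _
  have hbd : |∑ i, w i * δ i| ≤ ε * S := by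
    calc |∑ i, w i * δ i| ≤ ∑ i, |w i * δ i| := Finset.abs_sum_le_sum_abs _ _
    _ ≤ ∑ i, |w i| * ε := by
        apply Finset.sum_le_sum; intro i _
        rw [abs_mul]
        exact mul_le_mul_of_nonneg_left (hδ i) (abs_nonneg _)
    _ = ε * S := by rw [← Finset.sum_mul, hS]; ring
  have hsa : Real.sign a * a = |a| := by
    rcases lt_trichotomy a 0 with h | h | h
    · rw [Real.sign_of_neg h, abs_of_neg h]; ring
    · exact absurd h ha
    · rw [Real.sign_of_pos h, abs_of_pos h]; ring
  have key : |a + ε * Real.sign a * S| = |a| + ε * S := by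
    rcases lt_trichotomy a 0 with h | h | h
    · rw [Real.sign_of_neg h, abs_of_neg h]
      rw [abs_of_nonpos (by nlinarith)]; ring
    · exact absurd h ha
    · rw [Real.sign_of_pos h, abs_of_pos h]
      rw [abs_of_nonneg (by nlinarith)]; ring
  rw [key]
  calc |a + ∑ i, w i * δ i| ≤ |a| + |∑ i, w i * δ i| := abs_add_le _ _
  _ ≤ |a| + ε * S := by linarith
end

section
/- Let E be a real inner product space and f : E → ℝ a differentiable function whose gradient is affine Lipschitz with constants L ≥ 0 and c ≥ 0, i.e., ‖∇f(w₂) − ∇f(w₁)‖ ≤ L‖w₂ − w₁‖ + c for all w₁, w₂ ∈ E. Then for all w₁, w₂ ∈ E: f(w₂) − f(w₁) ≤ ⟪∇f(w₁), w₂ − w₁⟫ + (L/2)‖w₂ − w₁‖² + c·‖w₂ − w₁‖. -/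
/-!
Restrict `f` to the segment `t ↦ w₁ + t • v`, `v = w₂ - w₁`. The derivative of the restriction
at `t` exceeds its derivative at `0` by `⟪g (w₁ + t • v) - g w₁, v⟫ ≤ (L t ‖v‖ + c) ‖v‖`, and
integrating this linear-in-`t` bound over `[0, 1]` gives the quadratic term `L/2 ‖v‖²` and the
linear term `c ‖v‖`.
-/

open RealInnerProductSpace Set

theorem sub_le_of_deriv_le_affine {φ φ' : ℝ → ℝ} {a b T : ℝ} (hT : 0 ≤ T)
    (hφ : ∀ t ∈ Icc 0 T, HasDerivAt φ (φ' t) t)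
    (hφ' : ∀ t ∈ Ico 0 T, φ' t ≤ φ' 0 + a * t + b) :
    φ T - φ 0 ≤ φ' 0 * T + a / 2 * T ^ 2 + b * T := by
  let B : ℝ → ℝ := fun t => φ 0 + φ' 0 * t + a / 2 * t ^ 2 + b * t
  have hB : ∀ t, HasDerivAt B (φ' 0 + a * t + b) t := fun t => by
    have := ((((hasDerivAt_id t).const_mul (φ' 0)).const_add (φ 0)).add
      ((hasDerivAt_pow 2 t).const_mul (a / 2))).add ((hasDerivAt_id t).const_mul b)
    exact this.congr_deriv (by simp; ring)
  have hle : φ T ≤ φ 0 + φ' 0 * T + a / 2 * T ^ 2 + b * T :=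
    image_le_of_deriv_right_le_deriv_boundary
      (fun t ht => (hφ t ht).continuousAt.continuousWithinAt)
      (fun t ht => (hφ t (Ico_subset_Icc_self ht)).hasDerivWithinAt)
      (by simp [B]) (fun t _ => (hB t).continuousAt.continuousWithinAt)
      (fun t _ => (hB t).hasDerivWithinAt) hφ' ⟨hT, le_rfl⟩
  linarith

theorem HasGradientAt.hasDerivAt_add_smul {E : Type*} [NormedAddCommGroup E]
    [InnerProductSpace ℝ E] [CompleteSpace E] {f : E → ℝ} {g x v : E} {t : ℝ}
    (hf : HasGradientAt f g (x + t • v)) :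
    HasDerivAt (fun s : ℝ => f (x + s • v)) ⟪g, v⟫ t := by
  have hline : HasDerivAt (fun s : ℝ => x + s • v) v t := by
    simpa using ((hasDerivAt_id t).smul_const v).const_add x
  simpa [Function.comp_def] using hf.hasFDerivAt.comp_hasDerivAt t hline

theorem real_inner_le_inner_add_of_norm_sub_le {E : Type*} [NormedAddCommGroup E]
    [InnerProductSpace ℝ E] {u u' : E} {K : ℝ} (h : ‖u' - u‖ ≤ K) (v : E) :
    ⟪u', v⟫ ≤ ⟪u, v⟫ + K * ‖v‖ := by
  have : ⟪u' - u, v⟫ ≤ K * ‖v‖ :=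
    (real_inner_le_norm _ _).trans (mul_le_mul_of_nonneg_right h (norm_nonneg v))
  rwa [inner_sub_left, sub_le_iff_le_add'] at this

theorem descent_lemma_affine_lipschitz_gradient_general
    {E : Type*} [NormedAddCommGroup E] [InnerProductSpace ℝ E] [CompleteSpace E]
    (f : E → ℝ) (g : E → E) (L c : ℝ)
    (hgrad : ∀ w : E, HasGradientAt f (g w) w)
    (haff : ∀ w₁ w₂ : E, ‖g w₂ - g w₁‖ ≤ L * ‖w₂ - w₁‖ + c) :
    ∀ w₁ w₂ : E,
      f w₂ - f w₁ ≤ ⟪g w₁, w₂ - w₁⟫ + L / 2 * ‖w₂ - w₁‖ ^ 2 + c * ‖w₂ - w₁‖ := by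
  intro w₁ w₂
  obtain ⟨v, rfl⟩ : ∃ v, w₂ = w₁ + v := ⟨w₂ - w₁, (add_sub_cancel w₁ w₂).symm⟩
  rw [add_sub_cancel_left]
  have hderiv : ∀ t : ℝ, HasDerivAt (fun s : ℝ => f (w₁ + s • v)) ⟪g (w₁ + t • v), v⟫ t :=
    fun t => (hgrad _).hasDerivAt_add_smul
  have hbound : ∀ t ∈ Ico (0 : ℝ) 1,
      ⟪g (w₁ + t • v), v⟫ ≤ ⟪g (w₁ + (0 : ℝ) • v), v⟫ + L * ‖v‖ ^ 2 * t + c * ‖v‖ := by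
    intro t ht
    have hstep : ‖g (w₁ + t • v) - g w₁‖ ≤ L * t * ‖v‖ + c := by
      simpa [norm_smul, abs_of_nonneg ht.1, mul_assoc] using haff w₁ (w₁ + t • v)
    have := real_inner_le_inner_add_of_norm_sub_le hstep v
    simp only [zero_smul, add_zero]
    linarith
  have := sub_le_of_deriv_le_affine zero_le_one (fun t _ => hderiv t) hbound
  simp only [zero_smul, one_smul, add_zero] at this
  linarith

/-- Descent-lemma-type upper bound for a differentiable function whose gradient is
affine Lipschitz with constants `(L, c)`:
`f w₂ − f w₁ ≤ ⟪∇f(w₁), w₂ − w₁⟫ + (L/2)‖w₂ − w₁‖² + c‖w₂ − w₁‖`. -/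
theorem descent_lemma_affine_lipschitz_gradient
    {E : Type*} [NormedAddCommGroup E] [InnerProductSpace ℝ E] [CompleteSpace E]
    (f : E → ℝ) (g : E → E) (L c : ℝ) (hL : 0 ≤ L) (hc : 0 ≤ c)
    (hgrad : ∀ w : E, HasGradientAt f (g w) w)
    (haff : ∀ w₁ w₂ : E, ‖g w₂ - g w₁‖ ≤ L * ‖w₂ - w₁‖ + c) :
    ∀ w₁ w₂ : E,
      f w₂ - f w₁ ≤ ⟪g w₁, w₂ - w₁⟫ + L / 2 * ‖w₂ - w₁‖ ^ 2 + c * ‖w₂ - w₁‖ :=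
  descent_lemma_affine_lipschitz_gradient_general f g L c hgrad haff
end

section
/- Let E be a real inner product space and f : E → ℝ a convex differentiable function whose gradient is affine Lipschitz with constants L ≥ 0 and c ≥ 0, i.e., ‖∇f(w₂) − ∇f(w₁)‖ ≤ L‖w₂ − w₁‖ + c for all w₁, w₂ ∈ E. Then for all w₁, w₂ ∈ E: (1/(2(L+1)))·‖∇f(w₂) − ∇f(w₁)‖² ≤ f(w₁) − f(w₂) − ⟪∇f(w₂), w₁ − w₂⟫ + c²/2. -/
/-!
Compare `f` at `y = w₁ - (g w₁ - g w₂) / (L + 1)` with its two first-order models: convexity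
bounds `f y` below by the tangent at `w₂`, and the affine Lipschitz bound on `g` bounds it above
by the tangent at `w₁` plus `L/2 ‖y - w₁‖² + c ‖y - w₁‖`. The cross term `c ‖y - w₁‖` is absorbed
into `c²/2` by completing a square.
-/

open RealInnerProductSpace Set AffineMap

theorem sub_le_of_hasDerivAt_le_affine {φ φ' : ℝ → ℝ} {a b : ℝ}
    (hφ : ∀ t ∈ Icc (0 : ℝ) 1, HasDerivAt φ (φ' t) t)
    (hbound : ∀ t ∈ Ico (0 : ℝ) 1, φ' t ≤ a * t + b) :
    φ 1 - φ 0 ≤ a / 2 + b := by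
  let B : ℝ → ℝ := fun t => φ 0 + a / 2 * t ^ 2 + b * t
  have hB : ∀ t, HasDerivAt B (a * t + b) t := fun t =>
    ((((hasDerivAt_pow 2 t).const_mul (a / 2)).const_add (φ 0)).add
      ((hasDerivAt_id' t).const_mul b)).congr_deriv (by ring)
  have := image_le_of_deriv_right_le_deriv_boundary (f := φ) (B := B) (a := 0) (b := 1)
    (fun t ht => (hφ t ht).continuousAt.continuousWithinAt)
    (fun t ht => (hφ t (Ico_subset_Icc_self ht)).hasDerivWithinAt) (by simp [B])
    (fun t _ => (hB t).continuousAt.continuousWithinAt) (fun t _ => (hB t).hasDerivWithinAt)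
    hbound (right_mem_Icc.2 zero_le_one)
  simp only [B] at this
  linarith

section Gradient

variable {E : Type*} [NormedAddCommGroup E] [InnerProductSpace ℝ E] [CompleteSpace E]
  {f : E → ℝ}

theorem HasGradientAt.hasDerivAt_comp_lineMap {f' x y : E} {t : ℝ}
    (hf : HasGradientAt f f' (lineMap x y t)) :
    HasDerivAt (f ∘ lineMap x y) ⟪f', y - x⟫ t := by
  simpa [InnerProductSpace.toDual_apply_apply] using
    hf.hasFDerivAt.comp_hasDerivAt t hasDerivAt_lineMap

theorem ConvexOn.add_inner_sub_le_of_hasGradientAt {s : Set E} (hconv : ConvexOn ℝ s f)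
    {f' x y : E} (hx : x ∈ s) (hy : y ∈ s) (hf : HasGradientAt f f' x) :
    f x + ⟪f', y - x⟫ ≤ f y := by
  have hline : ConvexOn ℝ (lineMap x y ⁻¹' s) (f ∘ lineMap x y) :=
    hconv.comp_affineMap (lineMap x y)
  have := hline.le_slope_of_hasDerivAt (x := 0) (y := 1) (by simpa) (by simpa) zero_lt_one
    (HasGradientAt.hasDerivAt_comp_lineMap (by simpa))
  simp only [slope_def_field, Function.comp_apply, lineMap_apply_one, lineMap_apply_zero,
    sub_zero, div_one] at this
  linarith

theorem le_add_inner_add_of_norm_gradient_sub_le {g : E → E} {x y : E} {L c : ℝ}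
    (hgrad : ∀ w, HasGradientAt f (g w) w)
    (haff : ∀ w, ‖g w - g x‖ ≤ L * ‖w - x‖ + c) :
    f y ≤ f x + ⟪g x, y - x⟫ + L / 2 * ‖y - x‖ ^ 2 + c * ‖y - x‖ := by
  let φ : ℝ → ℝ := fun t => f (lineMap x y t) - t * ⟪g x, y - x⟫
  have hφ : ∀ t, HasDerivAt φ ⟪g (lineMap x y t) - g x, y - x⟫ t := fun t => by
    rw [inner_sub_left]
    exact (hgrad _).hasDerivAt_comp_lineMap.sub (hasDerivAt_mul_const _)
  have hbound : ∀ t ∈ Ico (0 : ℝ) 1,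
      ⟪g (lineMap x y t) - g x, y - x⟫ ≤ L * ‖y - x‖ ^ 2 * t + c * ‖y - x‖ := by
    rintro t ⟨ht, -⟩
    have hdist : ‖lineMap x y t - x‖ = t * ‖y - x‖ := by
      rw [← dist_eq_norm, dist_lineMap_left, Real.norm_of_nonneg ht, dist_eq_norm']
    calc ⟪g (lineMap x y t) - g x, y - x⟫
        ≤ ‖g (lineMap x y t) - g x‖ * ‖y - x‖ := real_inner_le_norm _ _
      _ ≤ (L * (t * ‖y - x‖) + c) * ‖y - x‖ := by
          rw [← hdist]; gcongr; exact haff _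
      _ = L * ‖y - x‖ ^ 2 * t + c * ‖y - x‖ := by ring
  have := sub_le_of_hasDerivAt_le_affine (fun t _ => hφ t) hbound
  simp only [φ, lineMap_apply_zero, lineMap_apply_one] at this
  linarith

end Gradient

theorem exists_inner_add_sq_add_norm_le {E : Type*} [NormedAddCommGroup E]
    [InnerProductSpace ℝ E] (d : E) {L : ℝ} (hL : 0 ≤ L) (c : ℝ) :
    ∃ u : E, ⟪d, u⟫ + L / 2 * ‖u‖ ^ 2 + c * ‖u‖ ≤
      -(1 / (2 * (L + 1)) * ‖d‖ ^ 2) + c ^ 2 / 2 := by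
  set s := 1 / (L + 1) with hs_def
  have hs : 0 < s := by positivity
  have hLs : L * s = 1 - s := by rw [hs_def]; field_simp; ring
  have hhalf : 1 / (2 * (L + 1)) = s / 2 := by rw [hs_def, mul_comm, div_div]
  refine ⟨-(s • d), ?_⟩
  rw [hhalf, inner_neg_right, real_inner_smul_right, real_inner_self_eq_norm_sq, norm_neg,
    norm_smul, Real.norm_of_nonneg hs.le]
  linear_combination (sq_nonneg (s * ‖d‖ - c)) / 2 + (s * ‖d‖ ^ 2 / 2) * hLs

theorem cocoercivity_affine_lipschitz_gradient_general
    {E : Type*} [NormedAddCommGroup E] [InnerProductSpace ℝ E] [CompleteSpace E]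
    (f : E → ℝ) (g : E → E) (L c : ℝ) (hL : 0 ≤ L)
    (hconv : ConvexOn ℝ Set.univ f)
    (hgrad : ∀ w : E, HasGradientAt f (g w) w)
    (haff : ∀ w₁ w₂ : E, ‖g w₂ - g w₁‖ ≤ L * ‖w₂ - w₁‖ + c) :
    ∀ w₁ w₂ : E,
      1 / (2 * (L + 1)) * ‖g w₂ - g w₁‖ ^ 2 ≤
        f w₁ - f w₂ - ⟪g w₂, w₁ - w₂⟫ + c ^ 2 / 2 := by
  intro w₁ w₂
  obtain ⟨u, hu⟩ := exists_inner_add_sq_add_norm_le (g w₁ - g w₂) hL c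
  have hlower := hconv.add_inner_sub_le_of_hasGradientAt (mem_univ w₂) (mem_univ (w₁ + u))
    (hgrad w₂)
  have hupper := le_add_inner_add_of_norm_gradient_sub_le (y := w₁ + u) hgrad (haff w₁)
  rw [show w₁ + u - w₂ = (w₁ - w₂) + u by abel, inner_add_right] at hlower
  rw [add_sub_cancel_left] at hupper
  rw [inner_sub_left, norm_sub_rev] at hu
  linarith

/-- Co-coercivity-type inequality for a convex differentiable function whose
gradient is affine Lipschitz with constants `(L, c)`:
`(1/(2(L+1)))‖∇f(w₂) − ∇f(w₁)‖² ≤ f w₁ − f w₂ − ⟪∇f(w₂), w₁ − w₂⟫ + c²/2`. -/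
theorem cocoercivity_affine_lipschitz_gradient
    {E : Type*} [NormedAddCommGroup E] [InnerProductSpace ℝ E] [CompleteSpace E]
    (f : E → ℝ) (g : E → E) (L c : ℝ) (hL : 0 ≤ L) (hc : 0 ≤ c)
    (hconv : ConvexOn ℝ Set.univ f)
    (hgrad : ∀ w : E, HasGradientAt f (g w) w)
    (haff : ∀ w₁ w₂ : E, ‖g w₂ - g w₁‖ ≤ L * ‖w₂ - w₁‖ + c) :
    ∀ w₁ w₂ : E,
      1 / (2 * (L + 1)) * ‖g w₂ - g w₁‖ ^ 2 ≤
        f w₁ - f w₂ - ⟪g w₂, w₁ - w₂⟫ + c ^ 2 / 2 :=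
  cocoercivity_affine_lipschitz_gradient_general f g L c hL hconv hgrad haff
end
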